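/- arXiv:2512.16691 — 2 statements merged into one kernel-verified Lean document; each statement's English description precedes it below -/
import Mathlib

section
/- Let T and T' be unrooted binary phylogenetic trees on a taxon set X that have an interrupted 4-chain (a,b,c,d) with interrupter-subtree taxon set B, and let F be an agreement forest for T and T' with a block U such that {a,b,c,d} ⊆ U. Then U ∩ B = ∅; consequently the embedding T[U] does not use the interrupter edge. -/
/-!
Common definitions for formalizing statements about maximum agreement forests
of unrooted binary phylogenetic trees.

An unrooted binary phylogenetic forest on a taxon set `X` is modelled as a
finite acyclic simple graph together with a labelling of taxa by vertices,
such that the vertices of degree ≤ 1 are exactly the (injectively) labelled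
leaves and every other vertex has degree 3.  A tree is a connected forest.
Two phylogenetic trees on the same taxon set are regarded as equal when there
is a label-preserving isomorphism; accordingly, the condition `T|U = T'|U`
(equality of the restrictions obtained by suppressing degree-2 vertices) is
encoded by the classical equivalent condition that `T` and `T'` induce the
same quartet topologies on `U` (for binary trees on a common leaf set,
equality of restrictions is equivalent to agreement of all quartets, where a
quartet `wx|yz` holds iff the path from `w` to `x` is vertex-disjoint from
the path from `y` to `z`).
-/

namespace Phylo

/-- An unrooted binary phylogenetic forest on the taxon set `X`:
a disjoint union of unrooted binary phylogenetic trees whose leaf (taxon)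
sets partition `X`. -/
structure PhyloForest (α : Type) (X : Finset α) where
  /-- the vertex type -/
  V : Type
  /-- the vertex set is finite -/
  fintV : Fintype V
  /-- the underlying simple graph -/
  G : SimpleGraph V
  /-- the graph is acyclic -/
  acyclic : G.IsAcyclic
  /-- the labelling of taxa by vertices (only its values on `X` matter) -/
  label : α → V
  /-- taxa are labelled injectively -/
  label_injOn : Set.InjOn label (↑X : Set α)
  /-- the labelled vertices are exactly the vertices of degree ≤ 1
  (leaves; a degree-0 vertex is a single-vertex tree of the forest) -/
  leaves_eq : label '' (↑X : Set α) = {v : V | (G.neighborSet v).ncard ≤ 1}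
  /-- every unlabelled (internal) vertex has degree 3 -/
  internal_deg : ∀ v : V, v ∉ label '' (↑X : Set α) → (G.neighborSet v).ncard = 3

/-- An unrooted binary phylogenetic tree is a connected phylogenetic forest. -/
def PhyloForest.IsTree {α : Type} {X : Finset α} (A : PhyloForest α X) : Prop :=
  A.G.Connected

/-- The unique neighbour of a leaf `ℓ` (an arbitrary neighbour in general;
for a leaf of a phylogenetic forest the neighbour is unique). -/
noncomputable def parentIn {V : Type} (G : SimpleGraph V) (ℓ : V) : V :=
  letI := Classical.dec (∃ w, G.Adj ℓ w)
  if h : ∃ w, G.Adj ℓ w then h.choose else ℓ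

/-- `p_x`, the unique neighbour of the leaf labelled `x`. -/
noncomputable def PhyloForest.parent {α : Type} {X : Finset α} (A : PhyloForest α X)
    (x : α) : A.V :=
  parentIn A.G (A.label x)

/-- A list of vertices forms a path in `G`: consecutive vertices are adjacent
and all vertices are distinct. -/
def IsVertexPath {V : Type} (G : SimpleGraph V) (P : List V) : Prop :=
  P.Chain' G.Adj ∧ P.Nodup

/-- `K = (ℓ₁, …, ℓₙ)` is an `n`-chain with respect to the graph `G` and the
labelling `lab`: the taxa are distinct, `n ≥ 2`, and either
`(p_{ℓ₁}, …, p_{ℓₙ})` is a path, or `p_{ℓ₁} = p_{ℓ₂}` and `(p_{ℓ₂}, …, p_{ℓₙ})`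
is a path, or `p_{ℓ_{n-1}} = p_{ℓₙ}` and `(p_{ℓ₁}, …, p_{ℓ_{n-1}})` is a path
(the last case is phrased via the reversed list; a reversed path is a path). -/
def IsChainIn {α V : Type} (G : SimpleGraph V) (lab : α → V) (K : List α) : Prop :=
  2 ≤ K.length ∧ K.Nodup ∧
    (IsVertexPath G (K.map fun x => parentIn G (lab x)) ∨
      (∃ p q Q, K.map (fun x => parentIn G (lab x)) = p :: q :: Q ∧ p = q ∧
        IsVertexPath G (q :: Q)) ∨
      (∃ p q Q, (K.map fun x => parentIn G (lab x)).reverse = p :: q :: Q ∧ p = q ∧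
        IsVertexPath G (q :: Q)))

/-- `K` is an `n`-chain of the phylogenetic forest `A` (i.e. of one of its
trees). -/
def PhyloForest.IsChain {α : Type} {X : Finset α} (A : PhyloForest α X)
    (K : List α) : Prop :=
  (∀ x ∈ K, x ∈ X) ∧ IsChainIn A.G A.label K

/-- The chain `K` is pendant: `p_{ℓ₁} = p_{ℓ₂}` or `p_{ℓ_{n-1}} = p_{ℓₙ}`. -/
def IsPendantIn {α V : Type} (G : SimpleGraph V) (lab : α → V) (K : List α) : Prop :=
  (∃ x y L, K = x :: y :: L ∧ parentIn G (lab x) = parentIn G (lab y)) ∨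
  (∃ x y L, K.reverse = x :: y :: L ∧ parentIn G (lab x) = parentIn G (lab y))

/-- The chain `K` is pendant in the phylogenetic forest `A`. -/
def PhyloForest.ChainPendant {α : Type} {X : Finset α} (A : PhyloForest α X)
    (K : List α) : Prop :=
  IsPendantIn A.G A.label K

/-- The set of vertices lying on some path between `x` and `y` in `G`
(in a tree: the vertices of the unique path from `x` to `y`). -/
def vertsBetween {V : Type} (G : SimpleGraph V) (x y : V) : Set V :=
  {w | ∃ p : G.Walk x y, p.IsPath ∧ w ∈ p.support}

/-- The vertex set of the embedding `A[U]`: the minimal subtree of `A`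
connecting the leaves labelled by `U` (the union of all pairwise paths). -/
def embed {α : Type} {X : Finset α} (A : PhyloForest α X) (U : Finset α) :
    Set A.V :=
  ⋃ x ∈ U, ⋃ y ∈ U, vertsBetween A.G (A.label x) (A.label y)

/-- The embedding `A[U]` uses the edge `{u,v}`. -/
def embedUsesEdge {α : Type} {X : Finset α} (A : PhyloForest α X) (U : Finset α)
    (u v : A.V) : Prop :=
  ∃ x ∈ U, ∃ y ∈ U, ∃ p : A.G.Walk (A.label x) (A.label y),
    p.IsPath ∧ s(u, v) ∈ p.edges

/-- `A` displays the quartet `wx|yz`: the path between (the leaves labelled)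
`w` and `x` is vertex-disjoint from the path between `y` and `z`. -/
def Quartet {α : Type} {X : Finset α} (A : PhyloForest α X) (w x y z : α) : Prop :=
  Disjoint (vertsBetween A.G (A.label w) (A.label x))
    (vertsBetween A.G (A.label y) (A.label z))

/-- `A|U = B|U`: the restrictions of `A` and `B` to the taxon set `U` are equal
(as phylogenetic trees up to label-preserving isomorphism), encoded by the
classical equivalent condition that all quartet topologies on `U` agree. -/
def SameTopology {α : Type} {X : Finset α} (A B : PhyloForest α X)
    (U : Finset α) : Prop :=
  ∀ w x y z : α, w ∈ U → x ∈ U → y ∈ U → z ∈ U → ([w, x, y, z] : List α).Nodup →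
    (Quartet A w x y z ↔ Quartet B w x y z)

/-- All taxa of `U` lie in the same tree (connected component) of the forest
`A`. -/
def InOneTree {α : Type} {X : Finset α} (A : PhyloForest α X) (U : Finset α) : Prop :=
  ∀ x ∈ U, ∀ y ∈ U, A.G.Reachable (A.label x) (A.label y)

/-- `F` is a partition of the taxon set `X` (into nonempty blocks). -/
def IsPartitionOn {α : Type} (X : Finset α) (F : Finset (Finset α)) : Prop :=
  (∀ U ∈ F, U ⊆ X ∧ U.Nonempty) ∧
  (∀ U ∈ F, ∀ W ∈ F, U ≠ W → Disjoint U W) ∧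
  (∀ x ∈ X, ∃ U ∈ F, x ∈ U)

/-- `F` is an agreement forest for `A` and `B`: a partition of `X`, refining
the partition of `X` given by the trees of `A` and of `B`, such that
`A|U = B|U` for every block `U`, and the embeddings of distinct blocks are
vertex-disjoint in `A` and in `B`.  (When `A` and `B` are trees the refinement
conditions hold trivially and this is exactly the notion of an agreement
forest for two trees; when `B` is a forest these are exactly the agreement
forests reachable by cutting edges in `B`.) -/
def IsAgreementForest {α : Type} {X : Finset α} (A B : PhyloForest α X)
    (F : Finset (Finset α)) : Prop :=
  IsPartitionOn X F ∧
  (∀ U ∈ F, InOneTree A U ∧ InOneTree B U) ∧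
  (∀ U ∈ F, SameTopology A B U) ∧
  ∀ U ∈ F, ∀ W ∈ F, U ≠ W →
    Disjoint (embed A U) (embed A W) ∧ Disjoint (embed B U) (embed B W)

/-- `F` is a maximum agreement forest (an agreement forest of minimum size,
the size being the number of blocks). -/
def IsMAF {α : Type} {X : Finset α} (A B : PhyloForest α X)
    (F : Finset (Finset α)) : Prop :=
  IsAgreementForest A B F ∧
    ∀ F₂ : Finset (Finset α), IsAgreementForest A B F₂ → F.card ≤ F₂.card

/-- The partition `F` preserves the taxon set `K`: all taxa of `K` lie in a
single block of `F`. -/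
def Preserves {α : Type} (F : Finset (Finset α)) (K : Finset α) : Prop :=
  ∃ U ∈ F, K ⊆ U

/-- `{p, q}` is a cherry of `A`: two distinct taxa with a common parent. -/
def IsCherry {α : Type} {X : Finset α} (A : PhyloForest α X) (p q : α) : Prop :=
  p ≠ q ∧ p ∈ X ∧ q ∈ X ∧ A.parent p = A.parent q

/-- `A` has a 2-2-2 star on `a,b,c,d,e,f`: `(a,b)`, `(c,d)`, `(e,f)` are
2-chains and there is a vertex `v` whose three neighbours are exactly
`p_a, p_c, p_e` (pairwise distinct) and which is distinct from
`p_b, p_d, p_f`. -/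
def Star222 {α : Type} {X : Finset α} (A : PhyloForest α X)
    (a b c d e f : α) : Prop :=
  A.IsChain [a, b] ∧ A.IsChain [c, d] ∧ A.IsChain [e, f] ∧
  A.parent a ≠ A.parent c ∧ A.parent a ≠ A.parent e ∧ A.parent c ≠ A.parent e ∧
  ∃ v : A.V, A.G.neighborSet v = {A.parent a, A.parent c, A.parent e} ∧
    v ≠ A.parent b ∧ v ≠ A.parent d ∧ v ≠ A.parent f

/-- `A` has a 2-2-1 star on `a,b,c,d,e`: `(a,b)` and `(c,d)` are 2-chains and
there is a vertex `v` whose three neighbours are exactly `p_a, p_c, p_e`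
(pairwise distinct) and which is distinct from `p_b` and `p_d`. -/
def Star221 {α : Type} {X : Finset α} (A : PhyloForest α X)
    (a b c d e : α) : Prop :=
  A.IsChain [a, b] ∧ A.IsChain [c, d] ∧ e ∈ X ∧
  A.parent a ≠ A.parent c ∧ A.parent a ≠ A.parent e ∧ A.parent c ≠ A.parent e ∧
  ∃ v : A.V, A.G.neighborSet v = {A.parent a, A.parent c, A.parent e} ∧
    v ≠ A.parent b ∧ v ≠ A.parent d

/-- `A` has a 2-1-1 star on `a,b,c,d`: `(a,b)` is a 2-chain and there is a
vertex `v` whose three neighbours are exactly `p_a, p_c, p_d` (pairwise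
distinct) and which is distinct from `p_b`. -/
def Star211 {α : Type} {X : Finset α} (A : PhyloForest α X)
    (a b c d : α) : Prop :=
  A.IsChain [a, b] ∧ c ∈ X ∧ d ∈ X ∧
  A.parent a ≠ A.parent c ∧ A.parent a ≠ A.parent d ∧ A.parent c ≠ A.parent d ∧
  ∃ v : A.V, A.G.neighborSet v = {A.parent a, A.parent c, A.parent d} ∧
    v ≠ A.parent b

/-- The vertices on the `u`-side after deleting the edge `{u,v}`:
the pendant subtree detached by removing that edge (in a tree). -/
def pendantSide {V : Type} (G : SimpleGraph V) (u v : V) : Set V :=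
  {w | (G.deleteEdges {s(u, v)}).Reachable u w}

/-- The graph obtained from `G` by restricting to the vertex set `C` and
suppressing the degree-2 vertex `v`: vertices of `C` are adjacent if they were
adjacent in `G`, or if they are distinct common neighbours of `v`. -/
def suppressAt {V : Type} (G : SimpleGraph V) (C : Set V) (v : V) :
    SimpleGraph V where
  Adj x y := x ∈ C ∧ y ∈ C ∧ (G.Adj x y ∨ (G.Adj x v ∧ G.Adj v y ∧ x ≠ y))
  symm := by
    constructor
    rintro x y ⟨hx, hy, h | ⟨h1, h2, h3⟩⟩
    · exact ⟨hy, hx, Or.inl h.symm⟩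
    · exact ⟨hy, hx, Or.inr ⟨h2.symm, h1.symm, h3.symm⟩⟩
  loopless := by
    constructor
    rintro x ⟨-, -, h | ⟨-, -, h⟩⟩
    · exact G.irrefl h
    · exact h rfl

/-- `T` has an interrupted 4-chain `(a,b,c,d)` with interrupter edge `{u,v}`
and interrupter-subtree taxon set `B`: removing the edge `{u,v}` detaches a
pendant subtree (the `u`-side) whose taxon set is exactly `B`, with
`∅ ≠ B ⊆ X ∖ {a,b,c,d}`; the endpoint `v` outside the pendant subtree lies on
the path of `T` between `p_b` and `p_c`; and `(a,b,c,d)` is a 4-chain of the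
tree obtained from `T` by deleting the pendant subtree together with the edge
`{u,v}` and suppressing the resulting degree-2 vertex `v`. -/
def HasInterrupter {α : Type} {X : Finset α} (T : PhyloForest α X)
    (a b c d : α) (B : Finset α) (u v : T.V) : Prop :=
  a ∈ X ∧ b ∈ X ∧ c ∈ X ∧ d ∈ X ∧
  B.Nonempty ∧ (↑B : Set α) ⊆ (↑X : Set α) \ {a, b, c, d} ∧
  T.G.Adj u v ∧ v ∉ pendantSide T.G u v ∧
  (∀ x ∈ X, (T.label x ∈ pendantSide T.G u v ↔ x ∈ B)) ∧
  v ∈ vertsBetween T.G (T.parent b) (T.parent c) ∧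
  IsChainIn (suppressAt T.G ((pendantSide T.G u v)ᶜ \ {v}) v) T.label [a, b, c, d]

/-!
If a taxon `x` of the block lay in `B`, every path of `T` from `x` to a taxon outside `B` would
pass through the interrupter edge, hence through `v`, which lies on the path between `b` and `c`;
so `T` displays neither `xa|bc` nor `xd|bc`. In `T'`, the path between `b` and `c` is
`b, p_b, p_c, c`, and `p_b` and `p_c` (being of degree 3) each have exactly one further
neighbour, leading to `a` and to `d` respectively without touching that path. The path from `x`
enters `{b, p_b, p_c, c}` through one of these two neighbours, so `T'` displays `xa|bc` or
`xd|bc`, contradicting `T|U = T'|U`. A path of `T` through the interrupter edge has an endpoint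
in the pendant subtree, so `T[U]` avoids that edge once `U ∩ B = ∅`.
-/

end Phylo

namespace SimpleGraph

variable {V : Type} {G : SimpleGraph V}

def ReachableAvoiding (G : SimpleGraph V) (S : Set V) (x y : V) : Prop :=
  ∃ q : G.Walk x y, ∀ z ∈ q.support, z ∉ S

namespace ReachableAvoiding

variable {S : Set V} {x y z : V}

lemma refl (hx : x ∉ S) : G.ReachableAvoiding S x x :=
  ⟨Walk.nil, by simpa using hx⟩

lemma notMem_left (h : G.ReachableAvoiding S x y) : x ∉ S :=
  let ⟨q, hq⟩ := h
  hq x q.start_mem_support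

lemma notMem_right (h : G.ReachableAvoiding S x y) : y ∉ S :=
  let ⟨q, hq⟩ := h
  hq y q.end_mem_support

lemma cons (hxy : G.Adj x y) (hx : x ∉ S) (h : G.ReachableAvoiding S y z) :
    G.ReachableAvoiding S x z := by
  obtain ⟨q, hq⟩ := h
  refine ⟨.cons hxy q, ?_⟩
  simpa only [Walk.support_cons, List.mem_cons, forall_eq_or_imp] using ⟨hx, hq⟩

lemma trans (h₁ : G.ReachableAvoiding S x y) (h₂ : G.ReachableAvoiding S y z) :
    G.ReachableAvoiding S x z := by
  obtain ⟨p, hp⟩ := h₁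
  obtain ⟨q, hq⟩ := h₂
  refine ⟨p.append q, fun w hw => ?_⟩
  rcases (Walk.mem_support_append_iff p q).mp hw with hw | hw
  exacts [hp w hw, hq w hw]

end ReachableAvoiding

lemma Walk.exists_reachableAvoiding_boundary {S : Set V} {x y : V} (p : G.Walk x y)
    (hx : x ∉ S) (hy : y ∈ S) : ∃ w s, s ∈ S ∧ G.Adj w s ∧ G.ReachableAvoiding S x w := by
  induction p with
  | nil => exact absurd hy hx
  | @cons x x₁ y h q ih =>
    by_cases hx₁ : x₁ ∈ S
    · exact ⟨x, x₁, hx₁, h, .refl hx⟩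
    · obtain ⟨w, s, hs, hws, hxw⟩ := ih hx₁ hy
      exact ⟨w, s, hs, hws, .cons h hx hxw⟩

lemma Walk.IsPath.eq_or_eq_of_leaf_mem_support {l m s t : V} (hl : G.neighborSet l ⊆ {m})
    {p : G.Walk s t} (hp : p.IsPath) (h : l ∈ p.support) : l = s ∨ l = t := by
  induction p with
  | nil => simpa using h
  | @cons s s₁ t hadj q ih =>
    rw [Walk.cons_isPath_iff] at hp
    rcases List.mem_cons.mp (Walk.support_cons hadj q ▸ h) with rfl | h
    · exact .inl rfl
    rcases ih hp.1 h with rfl | rfl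
    · by_cases hq : q.Nil
      · exact .inr hq.eq
      -- an interior vertex of a path has two distinct neighbours on it
      have hs : s = m := hl hadj.symm
      have hsnd : q.snd = m := hl (q.adj_snd hq)
      exact absurd (hs ▸ hsnd ▸ List.mem_of_mem_tail (q.snd_mem_tail_support hq)) hp.2
    · exact .inr rfl

lemma Reachable.mem_of_adj_closed {C : Set V} (hC : ∀ x y, x ∈ C → G.Adj x y → y ∈ C)
    {x y : V} (h : G.Reachable x y) (hx : x ∈ C) : y ∈ C := by
  obtain ⟨p⟩ := h
  induction p with
  | nil => exact hx
  | cons hadj _ ih => exact ih (hC _ _ hx hadj)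

lemma reachable_deleteEdges_of_notMem_edges {s t : V} {e : Sym2 V} (p : G.Walk s t)
    (he : e ∉ p.edges) : (G.deleteEdges {e}).Reachable s t :=
  ⟨p.toDeleteEdges {e} (by rintro _ he' rfl; exact he he')⟩

end SimpleGraph

lemma Set.eq_of_ncard_eq_three {β : Type} {s : Set β} (hs : s.ncard = 3) {a b c : β}
    (ha : a ∈ s) (hb : b ∈ s) (hc : c ∈ s) (hab : a ≠ b) (hac : a ≠ c) (hbc : b ≠ c) :
    s = {a, b, c} := by
  have hsub : ({a, b, c} : Set β) ⊆ s := by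
    rintro y (rfl | rfl | rfl) <;> assumption
  refine (Set.eq_of_subset_of_ncard_le hsub ?_ (Set.finite_of_ncard_pos (by omega))).symm
  rw [hs, Set.ncard_eq_three.mpr ⟨a, b, c, hab, hac, hbc, rfl⟩]

namespace Phylo

open SimpleGraph

section Graph

variable {V : Type} {G : SimpleGraph V}

lemma vertsBetween_comm (s t : V) : vertsBetween G s t = vertsBetween G t s := by
  ext w
  constructor <;> rintro ⟨p, hp, hw⟩ <;> exact ⟨p.reverse, hp.reverse, by simpa using hw⟩

lemma vertsBetween_subset_support (hG : G.IsAcyclic) {s t : V} (q : G.Walk s t) :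
    vertsBetween G s t ⊆ {w | w ∈ q.support} := by
  classical
  rintro w ⟨p, hp, hw⟩
  have hpq : p = q.toPath :=
    congrArg Subtype.val ((hG.subsingleton_path _ _).elim ⟨p, hp⟩ q.toPath)
  exact q.support_toPath_subset_support (hpq ▸ hw)

lemma disjoint_vertsBetween_of_reachableAvoiding (hG : G.IsAcyclic) {S : Set V} {x y : V}
    (h : G.ReachableAvoiding S x y) : Disjoint (vertsBetween G x y) S := by
  obtain ⟨q, hq⟩ := h
  exact Set.disjoint_left.mpr fun w hw => hq w (vertsBetween_subset_support hG q hw)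

lemma disjoint_vertsBetween_or_of_boundary (hG : G.IsAcyclic) {S : Set V}
    {x a d s t s₀ : V} (hx : x ∉ S) (hs₀ : s₀ ∈ S) (hreach : G.Reachable x s₀)
    (hst : vertsBetween G s t ⊆ S) (hbd : ∀ w z, z ∈ S → w ∉ S → G.Adj w z →
      G.ReachableAvoiding S w a ∨ G.ReachableAvoiding S w d) :
    Disjoint (vertsBetween G x a) (vertsBetween G s t) ∨
      Disjoint (vertsBetween G x d) (vertsBetween G s t) := by
  obtain ⟨p⟩ := hreach
  obtain ⟨w, z, hz, hwz, hxw⟩ := p.exists_reachableAvoiding_boundary hx hs₀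
  exact (hbd w z hz hxw.notMem_right hwz).imp
    (fun hwa => (disjoint_vertsBetween_of_reachableAvoiding hG (hxw.trans hwa)).mono_right hst)
    fun hwd => (disjoint_vertsBetween_of_reachableAvoiding hG (hxw.trans hwd)).mono_right hst

lemma vertsBetween_subset_of_adj_leaf {l p q : V} (hl : G.neighborSet l ⊆ {p})
    (hlp : G.Adj l p) (hlq : l ≠ q) : vertsBetween G p q ⊆ vertsBetween G l q := by
  rintro w ⟨P, hP, hw⟩
  have hlP : l ∉ P.support := fun h =>
    (hP.eq_or_eq_of_leaf_mem_support hl h).elim hlp.ne hlq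
  exact ⟨.cons hlp P, hP.cons hlP, by simp [hw]⟩

lemma mem_vertsBetween_of_mem_pendantSide {u v s t : V} (hst : G.Reachable s t)
    (hs : s ∈ pendantSide G u v) (ht : t ∉ pendantSide G u v) : v ∈ vertsBetween G s t := by
  classical
  obtain ⟨p⟩ := hst
  refine ⟨p.toPath, p.toPath.2, ?_⟩
  by_contra hv
  exact ht (Reachable.trans hs (reachable_deleteEdges_of_notMem_edges _
    fun he => hv (Walk.snd_mem_support_of_mem_edges _ he)))

lemma mem_pendantSide_of_mem_edges {u v s t : V} (p : G.Walk s t) (hp : p.IsTrail)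
    (he : s(u, v) ∈ p.edges) : s ∈ pendantSide G u v ∨ t ∈ pendantSide G u v := by
  classical
  have hu : u ∈ p.support := p.fst_mem_support_of_mem_edges he
  have hnd := hp.edges_nodup
  rw [← p.take_spec hu, Walk.edges_append, List.nodup_append] at hnd
  by_cases h₁ : s(u, v) ∈ (p.takeUntil u hu).edges
  · exact .inr (reachable_deleteEdges_of_notMem_edges _ fun h₂ => hnd.2.2 _ h₁ _ h₂ rfl)
  · exact .inl (reachable_deleteEdges_of_notMem_edges _ h₁).symm

lemma isVertexPath_iff {P : List V} : IsVertexPath G P ↔ P.IsChain G.Adj ∧ P.Nodup :=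
  Iff.rfl

lemma adj_parentIn {l : V} (h : ∃ w, G.Adj l w) : G.Adj l (parentIn G l) := by
  simp only [parentIn, dif_pos h]
  exact h.choose_spec

end Graph

namespace PhyloForest

variable {α : Type} {X : Finset α} (A : PhyloForest α X)

lemma IsTree.reachable {A : PhyloForest α X} (hA : A.IsTree) (s t : A.V) :
    A.G.Reachable s t :=
  Connected.preconnected hA s t

lemma label_ne_label {y z : α} (hy : y ∈ X) (hz : z ∈ X) (hyz : y ≠ z) :
    A.label y ≠ A.label z :=
  fun h => hyz (A.label_injOn hy hz h)

lemma adj_parent (hA : A.IsTree) (hX : 1 < X.card) {y : α} (hy : y ∈ X) :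
    A.G.Adj (A.label y) (A.parent y) := by
  obtain ⟨z, hz, hzy⟩ := X.exists_mem_ne hX y
  obtain ⟨p⟩ := hA.reachable (A.label y) (A.label z)
  obtain ⟨w, hw, -⟩ := p.exists_eq_cons_of_ne (A.label_ne_label hy hz hzy.symm)
  exact adj_parentIn ⟨w, hw⟩

lemma neighborSet_label_subset (hA : A.IsTree) (hX : 1 < X.card) {y : α} (hy : y ∈ X) :
    A.G.neighborSet (A.label y) ⊆ {A.parent y} := by
  have := A.fintV
  have hleaf : A.label y ∈ {v | (A.G.neighborSet v).ncard ≤ 1} :=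
    A.leaves_eq ▸ ⟨y, hy, rfl⟩
  exact fun w hw => (Set.ncard_le_one_iff).mp hleaf hw (A.adj_parent hA hX hy)

lemma label_ne_parent (hA : A.IsTree) (hX : 2 < X.card) {y z : α} (hy : y ∈ X) (hz : z ∈ X) :
    A.label z ≠ A.parent y := by
  classical
  intro hzy
  have hX₁ : 1 < X.card := by omega
  have hadj : A.G.Adj (A.label y) (A.label z) := hzy ▸ A.adj_parent hA hX₁ hy
  have hNy : A.G.neighborSet (A.label y) ⊆ {A.label z} :=
    hzy ▸ A.neighborSet_label_subset hA hX₁ hy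
  have hNz : A.G.neighborSet (A.label z) ⊆ {A.label y} := by
    have hsub := A.neighborSet_label_subset hA hX₁ hz
    rwa [← hsub hadj.symm] at hsub
  -- two adjacent leaves form a whole component, which cannot hold a third taxon
  obtain ⟨w, hw, hwz⟩ := (X.erase y).exists_mem_ne (by rw [X.card_erase_of_mem hy]; omega) z
  have hclosed : ∀ s t, s ∈ ({A.label y, A.label z} : Set A.V) → A.G.Adj s t →
      t ∈ ({A.label y, A.label z} : Set A.V) := by
    rintro s t (rfl | rfl) hst
    · exact .inr (hNy hst)
    · exact .inl (hNz hst)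
  rcases (hA.reachable _ (A.label w)).mem_of_adj_closed hclosed (.inl rfl) with h | h
  · exact A.label_ne_label (Finset.mem_of_mem_erase hw) hy (Finset.ne_of_mem_erase hw) h
  · exact A.label_ne_label (Finset.mem_of_mem_erase hw) hz hwz h

lemma ncard_neighborSet_parent (hA : A.IsTree) (hX : 2 < X.card) {y : α} (hy : y ∈ X) :
    (A.G.neighborSet (A.parent y)).ncard = 3 :=
  A.internal_deg _ fun ⟨_, hz, h⟩ => A.label_ne_parent hA hX hy hz h

lemma vertsBetween_parent_subset (hA : A.IsTree) (hX : 2 < X.card) {b c : α} (hb : b ∈ X)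
    (hc : c ∈ X) (hbc : b ≠ c) :
    vertsBetween A.G (A.parent b) (A.parent c) ⊆ vertsBetween A.G (A.label b) (A.label c) := by
  have hX₁ : 1 < X.card := by omega
  calc vertsBetween A.G (A.parent b) (A.parent c)
      ⊆ vertsBetween A.G (A.label b) (A.parent c) :=
        vertsBetween_subset_of_adj_leaf (A.neighborSet_label_subset hA hX₁ hb)
          (A.adj_parent hA hX₁ hb) (A.label_ne_parent hA hX hc hb)
    _ = vertsBetween A.G (A.parent c) (A.label b) := vertsBetween_comm _ _
    _ ⊆ vertsBetween A.G (A.label c) (A.label b) :=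
        vertsBetween_subset_of_adj_leaf (A.neighborSet_label_subset hA hX₁ hc)
          (A.adj_parent hA hX₁ hc) (A.label_ne_label hc hb hbc.symm)
    _ = vertsBetween A.G (A.label b) (A.label c) := vertsBetween_comm _ _

lemma IsChain.adj_and_ends {a b c d : α} (h : A.IsChain [a, b, c, d]) :
    A.G.Adj (A.parent b) (A.parent c) ∧
      (A.parent a = A.parent b ∨ A.G.Adj (A.parent b) (A.parent a) ∧ A.parent a ≠ A.parent c) ∧
      (A.parent d = A.parent c ∨ A.G.Adj (A.parent c) (A.parent d) ∧ A.parent d ≠ A.parent b) := by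
  simp only [parent]
  obtain ⟨-, -, -, h | ⟨p, q, Q, heq, rfl, hpath⟩ | ⟨p, q, Q, heq, rfl, hpath⟩⟩ := h
  · simp only [isVertexPath_iff, List.map_cons, List.map_nil, List.isChain_cons_cons,
      List.isChain_singleton, List.nodup_cons, List.mem_cons, List.not_mem_nil, or_false,
      not_or, and_true] at h
    obtain ⟨⟨hab, hbc, hcd⟩, ⟨-, hac, -⟩, ⟨-, hbd⟩, -⟩ := h
    exact ⟨hbc, .inr ⟨hab.symm, hac⟩, .inr ⟨hcd, Ne.symm hbd⟩⟩
  · simp only [List.map_cons, List.map_nil, List.cons.injEq] at heq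
    obtain ⟨ha, hb, rfl⟩ := heq
    simp only [isVertexPath_iff, List.isChain_cons_cons, List.isChain_singleton,
      List.nodup_cons, List.mem_cons, List.not_mem_nil, or_false, not_or, and_true] at hpath
    obtain ⟨⟨hbc, hcd⟩, ⟨-, hbd⟩, -⟩ := hpath
    rw [ha, hb]
    exact ⟨hbc, .inl rfl, .inr ⟨hcd, Ne.symm hbd⟩⟩
  · simp only [List.map_cons, List.map_nil, List.reverse_cons, List.reverse_nil, List.nil_append,
      List.cons_append, List.cons.injEq] at heq
    obtain ⟨hd, hc, rfl⟩ := heq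
    simp only [isVertexPath_iff, List.isChain_cons_cons, List.isChain_singleton,
      List.nodup_cons, List.mem_cons, List.not_mem_nil, or_false, not_or, and_true] at hpath
    obtain ⟨⟨hcb, hba⟩, ⟨-, hca⟩, -⟩ := hpath
    rw [hc, hd]
    exact ⟨hcb.symm, .inr ⟨hba, Ne.symm hca⟩, .inl rfl⟩

def spine (b c : α) : Set A.V := {A.label b, A.parent b, A.parent c, A.label c}

lemma label_notMem_spine (hA : A.IsTree) (hX : 2 < X.card) {y b c : α} (hy : y ∈ X)
    (hb : b ∈ X) (hc : c ∈ X) (hyb : y ≠ b) (hyc : y ≠ c) : A.label y ∉ A.spine b c := by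
  simp only [spine, Set.mem_insert_iff, Set.mem_singleton_iff, not_or]
  exact ⟨A.label_ne_label hy hb hyb, A.label_ne_parent hA hX hb hy,
    A.label_ne_parent hA hX hc hy, A.label_ne_label hy hc hyc⟩

lemma parent_notMem_spine (hA : A.IsTree) (hX : 2 < X.card) {y b c : α} (hy : y ∈ X)
    (hb : b ∈ X) (hc : c ∈ X) (hyb : A.parent y ≠ A.parent b) (hyc : A.parent y ≠ A.parent c) :
    A.parent y ∉ A.spine b c := by
  simp only [spine, Set.mem_insert_iff, Set.mem_singleton_iff, not_or]
  exact ⟨fun h => A.label_ne_parent hA hX hy hb h.symm, hyb, hyc,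
    fun h => A.label_ne_parent hA hX hy hc h.symm⟩

lemma vertsBetween_label_subset_spine (hA : A.IsTree) (hX : 1 < X.card) {b c : α} (hb : b ∈ X)
    (hc : c ∈ X) (hbc : A.G.Adj (A.parent b) (A.parent c)) :
    vertsBetween A.G (A.label b) (A.label c) ⊆ A.spine b c := by
  refine (vertsBetween_subset_support A.acyclic (.cons (A.adj_parent hA hX hb)
    (.cons hbc (.cons (A.adj_parent hA hX hc).symm .nil)))).trans fun w hw => ?_
  simpa [spine] using hw

lemma eq_or_eq_of_adj_spine (hA : A.IsTree) (hX : 2 < X.card) {b c : α} (hb : b ∈ X)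
    (hc : c ∈ X) (hbc : A.G.Adj (A.parent b) (A.parent c)) {zb zc : A.V}
    (hzb : A.G.Adj (A.parent b) zb) (hzbS : zb ∉ A.spine b c)
    (hzc : A.G.Adj (A.parent c) zc) (hzcS : zc ∉ A.spine b c)
    {w s : A.V} (hs : s ∈ A.spine b c) (hw : w ∉ A.spine b c) (hws : A.G.Adj w s) :
    w = zb ∨ w = zc := by
  have hX₁ : 1 < X.card := by omega
  have hne : ∀ z ∈ A.spine b c, z ≠ zb ∧ z ≠ zc := fun z hz =>
    ⟨fun h => hzbS (h ▸ hz), fun h => hzcS (h ▸ hz)⟩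
  have hNb : A.G.neighborSet (A.parent b) = {A.label b, A.parent c, zb} :=
    Set.eq_of_ncard_eq_three (A.ncard_neighborSet_parent hA hX hb)
      (A.adj_parent hA hX₁ hb).symm hbc hzb (A.label_ne_parent hA hX hc hb)
      (hne _ (by simp [spine])).1 (hne _ (by simp [spine])).1
  have hNc : A.G.neighborSet (A.parent c) = {A.label c, A.parent b, zc} :=
    Set.eq_of_ncard_eq_three (A.ncard_neighborSet_parent hA hX hc)
      (A.adj_parent hA hX₁ hc).symm hbc.symm hzc (A.label_ne_parent hA hX hb hc)
      (hne _ (by simp [spine])).2 (hne _ (by simp [spine])).2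
  have hsw : w ∈ A.G.neighborSet s := hws.symm
  simp only [spine, Set.mem_insert_iff, Set.mem_singleton_iff] at hs hw
  rcases hs with rfl | rfl | rfl | rfl
  · exact absurd (A.neighborSet_label_subset hA hX₁ hb hsw) (by tauto)
  · rw [hNb] at hsw
    rcases hsw with rfl | rfl | rfl <;> tauto
  · rw [hNc] at hsw
    rcases hsw with rfl | rfl | rfl <;> tauto
  · exact absurd (A.neighborSet_label_subset hA hX₁ hc hsw) (by tauto)

lemma exists_adj_parent_reachableAvoiding (hA : A.IsTree) (hX : 1 < X.card) {S : Set A.V}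
    {y q : α} (hy : y ∈ X) (hyS : A.label y ∉ S)
    (h : A.parent y = A.parent q ∨ A.G.Adj (A.parent q) (A.parent y) ∧ A.parent y ∉ S) :
    ∃ z, A.G.Adj (A.parent q) z ∧ A.G.ReachableAvoiding S z (A.label y) := by
  rcases h with h | ⟨hadj, hyS'⟩
  · exact ⟨A.label y, h ▸ (A.adj_parent hA hX hy).symm, .refl hyS⟩
  · exact ⟨A.parent y, hadj, .cons (A.adj_parent hA hX hy).symm hyS' (.refl hyS)⟩

lemma quartet_or_quartet_of_isChain (hA : A.IsTree) {x a b c d : α}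
    (hchain : A.IsChain [a, b, c, d]) (hx : x ∈ X) (hxb : x ≠ b) (hxc : x ≠ c) :
    Quartet A x a b c ∨ Quartet A x d b c := by
  obtain ⟨hpbc, hendA, hendD⟩ := hchain.adj_and_ends
  obtain ⟨hmem, -, hnd, -⟩ := hchain
  simp only [List.mem_cons, List.not_mem_nil, or_false, forall_eq_or_imp, forall_eq] at hmem
  obtain ⟨ha, hb, hc, hd⟩ := hmem
  simp only [List.nodup_cons, List.mem_cons, List.not_mem_nil, or_false, not_or,
    List.nodup_nil, not_false_eq_true, and_true] at hnd
  obtain ⟨⟨hab, hac, -⟩, ⟨hbc, hbd⟩, hcd⟩ := hnd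
  have hX : 2 < X.card := Finset.two_lt_card.mpr ⟨a, ha, b, hb, c, hc, hab, hac, hbc⟩
  have hX₁ : 1 < X.card := by omega
  obtain ⟨za, hza, hzaS⟩ := A.exists_adj_parent_reachableAvoiding hA hX₁ ha
    (A.label_notMem_spine hA hX ha hb hc hab hac) (hendA.imp_right fun ⟨hadj, hne⟩ =>
      ⟨hadj, A.parent_notMem_spine hA hX ha hb hc hadj.ne.symm hne⟩)
  obtain ⟨zd, hzd, hzdS⟩ := A.exists_adj_parent_reachableAvoiding hA hX₁ hd
    (A.label_notMem_spine hA hX hd hb hc (Ne.symm hbd) (Ne.symm hcd))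
    (hendD.imp_right fun ⟨hadj, hne⟩ =>
      ⟨hadj, A.parent_notMem_spine hA hX hd hb hc hne hadj.ne.symm⟩)
  refine disjoint_vertsBetween_or_of_boundary A.acyclic
    (A.label_notMem_spine hA hX hx hb hc hxb hxc) (s₀ := A.parent b) (by simp [spine])
    (hA.reachable _ _) (A.vertsBetween_label_subset_spine hA hX₁ hb hc hpbc) ?_
  intro w s hs hw hws
  rcases A.eq_or_eq_of_adj_spine hA hX hb hc hpbc hza hzaS.notMem_left hzd
    hzdS.notMem_left hs hw hws with rfl | rfl
  exacts [.inl hzaS, .inr hzdS]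

lemma not_quartet_of_mem_pendantSide (hA : A.IsTree) {u v : A.V} {x y b c : α}
    (hx : A.label x ∈ pendantSide A.G u v) (hy : A.label y ∉ pendantSide A.G u v)
    (hv : v ∈ vertsBetween A.G (A.label b) (A.label c)) : ¬ Quartet A x y b c :=
  fun h => Set.disjoint_left.mp h
    (mem_vertsBetween_of_mem_pendantSide (hA.reachable _ _) hx hy) hv

end PhyloForest

/-- Let `T` and `T'` be unrooted binary phylogenetic trees on
a taxon set `X` that have an interrupted 4-chain `(a,b,c,d)` with interrupter
edge `{u,v}` and interrupter-subtree taxon set `B`, and let `F` be an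
agreement forest for `T` and `T'` with a block `U` such that
`{a,b,c,d} ⊆ U`.  Then `U ∩ B = ∅`; consequently the embedding `T[U]` does not
use the interrupter edge. -/
theorem chain_block_avoids_interrupter
    {α : Type} [DecidableEq α] {X : Finset α}
    (T T' : PhyloForest α X) (hT : T.IsTree) (hT' : T'.IsTree)
    (a b c d : α) (B : Finset α) (u v : T.V)
    (hchain' : T'.IsChain [a, b, c, d])
    (hint : HasInterrupter T a b c d B u v)
    (F : Finset (Finset α)) (hF : IsAgreementForest T T' F)
    (U : Finset α) (hU : U ∈ F) (habcd : ({a, b, c, d} : Finset α) ⊆ U) :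
    (∀ x ∈ U, x ∉ B) ∧ ¬ embedUsesEdge T U u v := by
  obtain ⟨hpart, -, hsame, -⟩ := hF
  obtain ⟨haX, hbX, hcX, hdX, -, hBsub, -, -, hlabB, hvbc, -⟩ := hint
  simp only [Finset.insert_subset_iff, Finset.singleton_subset_iff] at habcd
  obtain ⟨haU, hbU, hcU, hdU⟩ := habcd
  have hnd := hchain'.2.2.1
  simp only [List.nodup_cons, List.mem_cons, List.not_mem_nil, or_false, not_or,
    List.nodup_nil, not_false_eq_true, and_true] at hnd
  obtain ⟨⟨hab, hac, -⟩, ⟨hbc, hbd⟩, hcd⟩ := hnd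
  have hX : 2 < X.card := Finset.two_lt_card.mpr ⟨a, haX, b, hbX, c, hcX, hab, hac, hbc⟩
  have hv : v ∈ vertsBetween T.G (T.label b) (T.label c) :=
    T.vertsBetween_parent_subset hT hX hbX hcX hbc hvbc
  have hUB : ∀ x ∈ U, x ∉ B := by
    intro x hxU hxB
    obtain ⟨hxX, hxabcd⟩ := hBsub hxB
    simp only [Set.mem_insert_iff, Set.mem_singleton_iff, not_or] at hxabcd
    obtain ⟨hxa, hxb, hxc, hxd⟩ := hxabcd
    have hout : ∀ y ∈ X, y ∈ ({a, b, c, d} : Set α) → T.label y ∉ pendantSide T.G u v :=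
      fun y hy hyabcd h => (hBsub ((hlabB y hy).1 h)).2 hyabcd
    have hx := (hlabB x hxX).2 hxB
    rcases T'.quartet_or_quartet_of_isChain hT' hchain' hxX hxb hxc with h | h
    · exact T.not_quartet_of_mem_pendantSide hT hx (hout a haX (by simp)) hv
        ((hsame U hU x a b c hxU haU hbU hcU (by simp [*])).2 h)
    · exact T.not_quartet_of_mem_pendantSide hT hx (hout d hdX (by simp)) hv
        ((hsame U hU x d b c hxU hdU hbU hcU (by simp [*, Ne.symm hbd, Ne.symm hcd])).2 h)
  refine ⟨hUB, ?_⟩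
  rintro ⟨y₁, hy₁, y₂, hy₂, p, hp, he⟩
  rcases mem_pendantSide_of_mem_edges p hp.isTrail he with h | h
  · exact hUB y₁ hy₁ ((hlabB y₁ ((hpart.1 U hU).1 hy₁)).1 h)
  · exact hUB y₂ hy₂ ((hlabB y₂ ((hpart.1 U hU).1 hy₂)).1 h)

end Phylo
end

section
/- Let T be an unrooted binary phylogenetic tree on a taxon set X, let F' be a forest on X, let {p,q} be a cherry of T, and let F be an agreement forest for (T,F'). Then {p} is a block of F, or {q} is a block of F, or p and q lie in the same block of F; moreover, in the last case p and q lie in the taxon set of the same tree of F'. -/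
/-!
Common definitions for formalizing statements about maximum agreement forests
of unrooted binary phylogenetic trees.

An unrooted binary phylogenetic forest on a taxon set `X` is modelled as a
finite acyclic simple graph together with a labelling of taxa by vertices,
such that the vertices of degree ≤ 1 are exactly the (injectively) labelled
leaves and every other vertex has degree 3.  A tree is a connected forest.
Two phylogenetic trees on the same taxon set are regarded as equal when there
is a label-preserving isomorphism; accordingly, the condition `T|U = T'|U`
(equality of the restrictions obtained by suppressing degree-2 vertices) is
encoded by the classical equivalent condition that `T` and `T'` induce the
same quartet topologies on `U` (for binary trees on a common leaf set,
equality of restrictions is equivalent to agreement of all quartets, where a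
quartet `wx|yz` holds iff the path from `w` to `x` is vertex-disjoint from
the path from `y` to `z`).
-/

namespace Phylo

/-!
If neither `p` nor `q` is a singleton block, the embeddings of the blocks of `p` and of `q`
both pass through the common parent of the cherry, since every path leaving a leaf starts with
the edge to its parent. Embeddings of distinct blocks are disjoint, so `p` and `q` share a
block, and a block lies in one tree of `F'`.
-/

lemma eq_parentIn_of_adj {V : Type} {G : SimpleGraph V} {ℓ w : V}
    (hfin : (G.neighborSet ℓ).Finite) (hle : (G.neighborSet ℓ).ncard ≤ 1)
    (h : G.Adj ℓ w) : w = parentIn G ℓ := by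
  have hex : ∃ w, G.Adj ℓ w := ⟨w, h⟩
  rw [parentIn, dif_pos hex]
  exact (Set.ncard_le_one hfin).mp hle w h hex.choose hex.choose_spec

namespace PhyloForest

variable {α : Type} {X : Finset α} (A : PhyloForest α X)

lemma eq_parent_of_adj {x : α} {w : A.V} (hx : x ∈ X) (h : A.G.Adj (A.label x) w) :
    w = A.parent x := by
  have := A.fintV
  have hleaf : A.label x ∈ {v : A.V | (A.G.neighborSet v).ncard ≤ 1} :=
    A.leaves_eq ▸ Set.mem_image_of_mem A.label hx
  exact eq_parentIn_of_adj (Set.toFinite _) hleaf h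

lemma parent_mem_vertsBetween {x y : α} (hx : x ∈ X) (hy : y ∈ X) (hne : x ≠ y)
    (hreach : A.G.Reachable (A.label x) (A.label y)) :
    A.parent x ∈ vertsBetween A.G (A.label x) (A.label y) := by
  obtain ⟨P, hP⟩ := hreach.exists_isPath
  have hnil : ¬ P.Nil := SimpleGraph.Walk.not_nil_of_ne fun h => hne (A.label_injOn hx hy h)
  refine ⟨P, hP, ?_⟩
  rw [← A.eq_parent_of_adj hx (P.adj_snd hnil)]
  exact P.getVert_mem_support 1

end PhyloForest

lemma IsAgreementForest.parent_mem_embed {α : Type} {X : Finset α} {A B : PhyloForest α X}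
    {F : Finset (Finset α)} (hF : IsAgreementForest A B F) {U : Finset α} (hU : U ∈ F)
    {p : α} (hp : p ∈ U) (hUp : U ≠ {p}) : A.parent p ∈ embed A U := by
  obtain ⟨x, hx, hxp⟩ : ∃ x ∈ U, x ≠ p := by
    by_contra! h
    exact hUp (Finset.eq_singleton_iff_unique_mem.mpr ⟨hp, h⟩)
  have hUX := (hF.1.1 U hU).1
  have hpath := A.parent_mem_vertsBetween (hUX hp) (hUX hx) hxp.symm
    ((hF.2.1 U hU).1 p hp x hx)
  simp only [embed, Set.mem_iUnion]
  exact ⟨p, hp, x, hx, hpath⟩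

theorem cherry_trichotomy_general
    {α : Type} {X : Finset α}
    (T F' : PhyloForest α X)
    (p q : α) (hcherry : IsCherry T p q)
    (F : Finset (Finset α)) (hF : IsAgreementForest T F' F) :
    ({p} : Finset α) ∈ F ∨ ({q} : Finset α) ∈ F ∨
      ∃ U ∈ F, p ∈ U ∧ q ∈ U ∧ F'.G.Reachable (F'.label p) (F'.label q) := by
  obtain ⟨-, hpX, hqX, hpar⟩ := hcherry
  obtain ⟨U, hU, hpU⟩ := hF.1.2.2 p hpX
  obtain ⟨W, hW, hqW⟩ := hF.1.2.2 q hqX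
  by_cases hUp : U = {p}
  · exact Or.inl (hUp ▸ hU)
  by_cases hWq : W = {q}
  · exact Or.inr (Or.inl (hWq ▸ hW))
  have hUW : U = W := by
    by_contra hUW
    refine Set.disjoint_left.mp (hF.2.2.2 U hU W hW hUW).1
      (hF.parent_mem_embed hU hpU hUp) ?_
    exact hpar ▸ hF.parent_mem_embed hW hqW hWq
  subst hUW
  exact Or.inr (Or.inr ⟨U, hU, hpU, hqW, (hF.2.1 U hU).2 p hpU q hqW⟩)

/-- Let `T` be an unrooted binary phylogenetic tree on a
taxon set `X`, let `F'` be a forest on `X`, let `{p,q}` be a cherry of `T`,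
and let `F` be an agreement forest for `(T, F')`.  Then `{p}` is a block of
`F`, or `{q}` is a block of `F`, or `p` and `q` lie in the same block of `F`;
moreover, in the last case `p` and `q` lie in the taxon set of the same tree
of `F'`. -/
theorem cherry_trichotomy
    {α : Type} [DecidableEq α] {X : Finset α}
    (T F' : PhyloForest α X) (hT : T.IsTree)
    (p q : α) (hcherry : IsCherry T p q)
    (F : Finset (Finset α)) (hF : IsAgreementForest T F' F) :
    ({p} : Finset α) ∈ F ∨ ({q} : Finset α) ∈ F ∨
      ∃ U ∈ F, p ∈ U ∧ q ∈ U ∧ F'.G.Reachable (F'.label p) (F'.label q) :=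
  cherry_trichotomy_general T F' p q hcherry F hF

end Phylo
end
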